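/- Let p ≥ 5 be an integer, let L_n be the level words of the white metallic tree and L'_n those of the black metallic tree. Then for every n ≥ 1 the level word L_n decomposes as the concatenation L_n = L'_n ++ L_{n−1}: the level-n word of the white tree is the level-n word of the black tree followed by the level-(n−1) word of the white tree. -/
import Mathlib


/-- The two kinds of nodes of a metallic tree. -/
inductive Letter
  | B : Letter
  | W : Letter
deriving DecidableEq

/-- The generating rules: `B → B W^(p-4)` and `W → B W^(p-3)`. -/
def subst (p : ℕ) : Letter → List Letter
  | Letter.B => Letter.B :: List.replicate (p - 4) Letter.W
  | Letter.W => Letter.B :: List.replicate (p - 3) Letter.W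

/-- Level words of the white metallic tree (rooted at a white node). -/
def whiteLevel (p : ℕ) : ℕ → List Letter
  | 0 => [Letter.W]
  | n + 1 => (whiteLevel p n).flatMap (subst p)

/-- Level words of the black metallic tree (rooted at a black node). -/
def blackLevel (p : ℕ) : ℕ → List Letter
  | 0 => [Letter.B]
  | n + 1 => (blackLevel p n).flatMap (subst p)


/-- for every `n ≥ 1`, the level-`n` word of the white metallic
tree is the level-`n` word of the black tree followed by the level-`(n-1)`
word of the white tree: `L n = L' n ++ L (n-1)`. -/
theorem whiteLevel_eq_blackLevel_append (p : ℕ) (hp : 5 ≤ p) (n : ℕ) (hn : 1 ≤ n) :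
    whiteLevel p n = blackLevel p n ++ whiteLevel p (n - 1) := by
  induction n with
  | zero => omega
  | succ n ih =>
    cases n with
    | zero =>
      show subst p Letter.W ++ [] = (subst p Letter.B ++ []) ++ [Letter.W]
      simp only [subst, List.append_nil]
      have : p - 3 = (p - 4) + 1 := by omega
      rw [this, List.replicate_succ']
      simp
    | succ m =>
      have h : whiteLevel p (m + 2) = (whiteLevel p (m + 1)).flatMap (subst p) := rfl
      rw [h, ih (by omega)]
      simp only [List.flatMap_append]
      rfl
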